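/- First periodicity theorem: for each k ∈ {0,1,2,3}, if N ≥ 1 and p, q are natural numbers with 2^(N−1) ≤ p < 2^N ≤ q < 2^(N+1), then for every natural number m one has ω_k(p, q) = ω_k(p, q + m·2^N). -/

import Mathlib

/-- The five states of the Cayley–Dickson twist tree:
corner (C), top (T), left (L), diagonal (D) and interior (I). -/
inductive TwistState : Type
  | C | T | L | D | I
deriving DecidableEq

open TwistState

/-- The interior-node sign `i_k(a,b)` for the doubling product `P_k`, `k ∈ {0,1,2,3}`. -/
def iTwist (k : ℕ) (a b : Bool) : ℤ :=
  match k with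
  | 0 => if a = false ∧ b = false then -1 else 1
  | 1 => -1
  | 2 => 1
  | _ => if a = false ∧ b = false then 1 else -1

/-- One step of the twist-tree finite-state computation: from the current
(state, sign) pair, read a doublet of bits `(a, b)` and move to the new
(state, sign) pair. -/
def twistStep (k : ℕ) : TwistState × ℤ → Bool × Bool → TwistState × ℤ
  | (C, s), (false, false) => (C, s)
  | (C, s), (false, true)  => (T, s)
  | (C, s), (true, false)  => (L, s)
  | (C, s), (true, true)   => (D, -s)
  | (T, s), (false, false) => (T, s)
  | (T, s), (false, true)  => (T, s)
  | (T, s), (true, false)  => (I, s)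
  | (T, s), (true, true)   => (I, -s)
  | (L, s), (false, false) => (L, s)
  | (L, s), (false, true)  => (I, -s)
  | (L, s), (true, false)  => (L, s)
  | (L, s), (true, true)   => (I, s)
  | (D, s), (false, false) => (D, s)
  | (D, s), (false, true)  => (I, -s)
  | (D, s), (true, false)  => (I, s)
  | (D, s), (true, true)   => (D, s)
  | (I, s), (a, b)         => (I, s * iTwist k a b)

/-- The Cayley–Dickson twist `ω_k(p,q)` for the doubling product `P_k`:
write `p` and `q` in binary with a common number of bits (padding with
leading zeros), read the doublets of bits from most significant to least
significant, running the twist-tree automaton starting at state `C` with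
sign `+1`; the result is the final sign. -/
def omegaTwist (k : ℕ) (p q : ℕ) : ℤ :=
  (((List.range (max (Nat.size p) (Nat.size q))).reverse.map
      (fun i => (p.testBit i, q.testBit i))).foldl (twistStep k) (C, 1)).2


/-! Since `p < 2 ^ N ≤ q + m * 2 ^ N`, every doublet above position `N` has first bit `0` and at
least one of them has second bit `1`. Along such doublets the automaton moves from `C` to `T`
without changing the sign, so both twists are the run of the `N` lowest doublets from `(T, 1)`,
and these doublets are the same for `q` and `q + m * 2 ^ N`. -/

def twistRun (k p q n : ℕ) (s : TwistState × ℤ) : TwistState × ℤ :=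
  ((List.range n).reverse.map (fun i => (p.testBit i, q.testBit i))).foldl (twistStep k) s

lemma omegaTwist_eq_twistRun (k p q : ℕ) :
    omegaTwist k p q = (twistRun k p q (max p.size q.size) (C, 1)).2 := rfl

lemma twistRun_add (k p q N j : ℕ) (s : TwistState × ℤ) :
    twistRun k p q (N + j) s = twistRun k p q N
      (((List.range j).reverse.map (fun i => (p.testBit (N + i), q.testBit (N + i)))).foldl
        (twistStep k) s) := by
  simp only [twistRun, List.range_add, List.reverse_append, List.map_append, List.foldl_append,
    List.map_reverse, List.map_map, Function.comp_def]

lemma twistRun_congr_right {k p q q' n : ℕ} (h : ∀ i < n, q.testBit i = q'.testBit i)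
    (s : TwistState × ℤ) : twistRun k p q n s = twistRun k p q' n s := by
  unfold twistRun
  congr 1
  refine List.map_congr_left fun i hi => ?_
  rw [List.mem_reverse, List.mem_range] at hi
  rw [h i hi]

lemma foldl_twistStep_T_of_fst_false (k : ℕ) (s : ℤ) {l : List (Bool × Bool)}
    (hl : ∀ x ∈ l, x.1 = false) : l.foldl (twistStep k) (T, s) = (T, s) := by
  induction l with
  | nil => rfl
  | cons x l ih =>
    obtain ⟨a, b⟩ := x
    obtain rfl : a = false := hl _ List.mem_cons_self
    have hstep : twistStep k (T, s) (false, b) = (T, s) := by cases b <;> rfl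
    rw [List.foldl_cons, hstep]
    exact ih fun x hx => hl x (List.mem_cons_of_mem _ hx)

lemma foldl_twistStep_C_of_fst_false (k : ℕ) (s : ℤ) {l : List (Bool × Bool)}
    (hl : ∀ x ∈ l, x.1 = false) :
    l.foldl (twistStep k) (C, s) = (if l.any Prod.snd then T else C, s) := by
  induction l with
  | nil => rfl
  | cons x l ih =>
    obtain ⟨a, b⟩ := x
    obtain rfl : a = false := hl _ List.mem_cons_self
    have hl' : ∀ x ∈ l, x.1 = false := fun x hx => hl x (List.mem_cons_of_mem _ hx)
    cases b
    · exact ih hl'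
    · exact foldl_twistStep_T_of_fst_false k s hl'

lemma exists_testBit_add_of_two_pow_le {q N n : ℕ} (hq : 2 ^ N ≤ q) (hqn : q < 2 ^ (N + n)) :
    ∃ i < n, q.testBit (N + i) = true := by
  obtain ⟨i, hi⟩ := Nat.exists_testBit_of_ne_zero (x := q >>> N)
    (by rw [Nat.shiftRight_eq_div_pow]; exact (Nat.div_pos hq (Nat.two_pow_pos N)).ne')
  rw [Nat.testBit_shiftRight] at hi
  refine ⟨i, ?_, hi⟩
  by_contra! hni
  rw [Nat.testBit_lt_two_pow (hqn.trans_le (Nat.pow_le_pow_right two_pos (by omega)))] at hi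
  exact Bool.false_ne_true hi

lemma omegaTwist_eq_twistRun_T {k p q N : ℕ} (hp : p < 2 ^ N) (hq : 2 ^ N ≤ q) :
    omegaTwist k p q = (twistRun k p q N (T, 1)).2 := by
  have hN : N ≤ max p.size q.size := le_max_of_le_right (Nat.lt_size.2 hq).le
  obtain ⟨j, hj⟩ := Nat.exists_eq_add_of_le hN
  have hqj : q < 2 ^ (N + j) :=
    hj ▸ (Nat.lt_size_self q).trans_le (Nat.pow_le_pow_right two_pos (le_max_right _ _))
  rw [omegaTwist_eq_twistRun, hj, twistRun_add, foldl_twistStep_C_of_fst_false]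
  · obtain ⟨i, hi, hqi⟩ := exists_testBit_add_of_two_pow_le hq hqj
    have hany : ((List.range j).reverse.map
        (fun i => (p.testBit (N + i), q.testBit (N + i)))).any Prod.snd := by
      simpa using ⟨i, hi, hqi⟩
    rw [if_pos hany]
  · simp only [List.mem_map, List.mem_reverse, List.mem_range]
    rintro _ ⟨i, -, rfl⟩
    exact Nat.testBit_lt_two_pow (hp.trans_le (Nat.pow_le_pow_right two_pos (by omega)))

lemma testBit_add_mul_two_pow_of_lt (q m : ℕ) {N i : ℕ} (hi : i < N) :
    (q + m * 2 ^ N).testBit i = q.testBit i := by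
  have h := congrArg (Nat.testBit · i) (Nat.add_mul_mod_self_right q m (2 ^ N))
  simpa only [Nat.testBit_mod_two_pow, hi, decide_true, Bool.true_and] using h

/-- First periodicity theorem: for each `k ∈ {0,1,2,3}`, if `N ≥ 1` and
`2^(N-1) ≤ p < 2^N ≤ q < 2^(N+1)`, then for every natural number `m`,
`ω_k(p, q) = ω_k(p, q + m·2^N)`. -/
theorem omegaTwist_first_periodicity :
    ∀ k ∈ ({0, 1, 2, 3} : Finset ℕ), ∀ N p q : ℕ, 1 ≤ N →
      2 ^ (N - 1) ≤ p → p < 2 ^ N → 2 ^ N ≤ q → q < 2 ^ (N + 1) →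
      ∀ m : ℕ, omegaTwist k p q = omegaTwist k p (q + m * 2 ^ N) := by
  intro k _ N p q _ _ hp hq _ m
  rw [omegaTwist_eq_twistRun_T hp hq, omegaTwist_eq_twistRun_T hp (hq.trans (Nat.le_add_right _ _)),
    twistRun_congr_right fun i hi => (testBit_add_mul_two_pow_of_lt q m hi).symm]
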